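/- Assume the u_j are pairwise distinct. Then for every integer k ≥ 0: (i) for all x ∈ [0,1], φ_k(x) = Leb({ y ∈ [0,1] : φ_k(y) < φ_k(x) }); (ii) letting 0 = v_0 < v_1 < … < v_k < v_{k+1} = 1 be the increasing rearrangement of {0, u_1, …, u_k, 1}, the function φ_k is constant on each of the intervals [v_0, v_1), [v_1, v_2), …, [v_{k−1}, v_k), [v_k, 1], and takes distinct values on distinct intervals. -/

import Mathlib

open MeasureTheory

/-- `I(x,y) = (min(x,y), max(x,y)]`. -/
def gapInterval (x y : ℝ) : Set ℝ := Set.Ioc (min x y) (max x y)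

/-- `i(x,y) = inf { j ≥ 1 : u_j ∈ I(x,y) } ∈ ℕ ∪ {∞}` (with `inf ∅ = ∞`). -/
noncomputable def firstIdx (u : ℕ → ℝ) (x y : ℝ) : ℕ∞ :=
  sInf ((fun j : ℕ => (j : ℕ∞)) '' {j : ℕ | 1 ≤ j ∧ u j ∈ gapInterval x y})

/-- `x ≺ y` iff `i(x,y) < ∞` and `(y − x) · s_{i(x,y)} > 0`. -/
def Prec (u s : ℕ → ℝ) (x y : ℝ) : Prop :=
  ∃ j : ℕ, firstIdx u x y = (j : ℕ∞) ∧ (y - x) * s j > 0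

/-- `φ_k(x) = Leb({ y ∈ [0,1] : y ≺ x and i(x,y) ≤ k })`. -/
noncomputable def phiK (u s : ℕ → ℝ) (k : ℕ) (x : ℝ) : ℝ :=
  (volume {y : ℝ | y ∈ Set.Icc (0:ℝ) 1 ∧ Prec u s y x ∧ firstIdx u x y ≤ (k : ℕ∞)}).toReal

/-!
For indices `≤ k`, the relation "`y ≺ x` with `i(x,y) ≤ k`" is the lexicographic order on the
keys `j ↦ (u_j ≤ x ↔ 0 < s_j)` (`1 ≤ j ≤ k`): the first index where two keys differ is
`i(x,y)`, and the sign `s_{i(x,y)}` decides the direction. Hence `φ_k(x)` is the measure of the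
points of `[0,1]` with a smaller key. Keys are constant on the cells cut out by `u_1, …, u_k`,
distinct on distinct cells, and every cell has positive length, so `φ_k` is strictly increasing
in the key. Therefore `φ_k(y) < φ_k(x)` iff `y ≺ x` with `i(x,y) ≤ k`, which is (i); (ii) is the
behaviour of the keys on the cells.
-/

lemma mem_gapInterval_iff {x y p : ℝ} : p ∈ gapInterval x y ↔ ¬(p ≤ x ↔ p ≤ y) := by
  simp only [gapInterval, Set.mem_Ioc, min_lt_iff, le_max_iff]
  grind

lemma firstIdx_comm (u : ℕ → ℝ) (x y : ℝ) : firstIdx u x y = firstIdx u y x := by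
  simp only [firstIdx, gapInterval, min_comm, max_comm]

lemma firstIdx_eq_coe_iff {u : ℕ → ℝ} {x y : ℝ} {j : ℕ} :
    firstIdx u x y = j ↔ IsLeast {i | 1 ≤ i ∧ u i ∈ gapInterval x y} j := by
  rw [firstIdx]
  set J := {i | 1 ≤ i ∧ u i ∈ gapInterval x y}
  constructor
  · intro h
    have hne : J.Nonempty := by
      by_contra hJ
      rw [Set.not_nonempty_iff_eq_empty.1 hJ, Set.image_empty, sInf_empty] at h
      exact ENat.top_ne_natCast j h
    obtain ⟨i, hi, hij⟩ := csInf_mem (hne.image ((↑) : ℕ → ℕ∞))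
    rw [h, Nat.cast_inj] at hij
    subst hij
    refine ⟨hi, fun l hl => ?_⟩
    have : sInf ((↑) '' J) ≤ (l : ℕ∞) := sInf_le ⟨l, hl, rfl⟩
    rwa [h, Nat.cast_le] at this
  · intro h
    refine IsLeast.csInf_eq ⟨⟨j, h.1, rfl⟩, ?_⟩
    rintro _ ⟨i, hi, rfl⟩
    exact (Nat.cast_le (α := ℕ∞)).2 (h.2 hi)

lemma mul_sub_pos_iff_of_mem_gapInterval {x y p t : ℝ} (hp : p ∈ gapInterval x y) (ht : t ≠ 0) :
    0 < (x - y) * t ↔ (p ≤ x ↔ 0 < t) := by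
  rw [mem_gapInterval_iff] at hp
  by_cases hx : p ≤ x
  · have hy : y < p := lt_of_not_ge fun hy => hp (iff_of_true hx hy)
    rw [mul_pos_iff_of_pos_left (by linarith)]
    simp only [hx, true_iff]
  · have hy : p ≤ y := by tauto
    rw [← neg_mul_neg, neg_sub, mul_pos_iff_of_pos_left (by linarith), neg_pos]
    simp only [hx, false_iff, not_lt]
    exact ⟨le_of_lt, fun h => lt_of_le_of_ne h ht⟩

noncomputable def sideKey (u s : ℕ → ℝ) (k : ℕ) (x : ℝ) (j : ℕ) : Bool :=
  decide (1 ≤ j ∧ j ≤ k ∧ (u j ≤ x ↔ 0 < s j))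

lemma sideKey_eq_iff {u s : ℕ → ℝ} {k : ℕ} {x y : ℝ} :
    sideKey u s k x = sideKey u s k y ↔ ∀ j, 1 ≤ j → j ≤ k → (u j ≤ x ↔ u j ≤ y) := by
  constructor
  · intro h j hj hjk
    have := congrFun h j
    simp only [sideKey, hj, hjk, true_and, decide_eq_decide] at this
    tauto
  · intro h
    funext j
    simp only [sideKey, decide_eq_decide]
    constructor
    · rintro ⟨hj, hjk, hx⟩
      exact ⟨hj, hjk, (h j hj hjk).symm.trans hx⟩
    · rintro ⟨hj, hjk, hy⟩
      exact ⟨hj, hjk, (h j hj hjk).trans hy⟩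

lemma toLex_sideKey_lt_iff {u s : ℕ → ℝ} {k : ℕ} (hs : ∀ j, 1 ≤ j → s j ≠ 0) {x y : ℝ} :
    toLex (sideKey u s k y) < toLex (sideKey u s k x) ↔ Prec u s y x ∧ firstIdx u x y ≤ k := by
  have key_lt : ∀ j, sideKey u s k y j < sideKey u s k x j ↔
      (1 ≤ j ∧ j ≤ k) ∧ u j ∈ gapInterval x y ∧ (u j ≤ x ↔ 0 < s j) := by
    intro j
    simp only [sideKey, mem_gapInterval_iff, Bool.lt_iff, decide_eq_false_iff_not,
      decide_eq_true_eq]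
    tauto
  have key_ne : ∀ j, sideKey u s k y j ≠ sideKey u s k x j ↔
      (1 ≤ j ∧ j ≤ k) ∧ u j ∈ gapInterval x y := by
    intro j
    simp only [sideKey, mem_gapInterval_iff, ne_eq, decide_eq_decide]
    tauto
  simp only [Prec, firstIdx_comm u y x]
  constructor
  · rintro ⟨i, hbefore, hi⟩
    obtain ⟨⟨hi1, hik⟩, hgap, hside⟩ := (key_lt i).1 hi
    have hfirst : firstIdx u x y = i := firstIdx_eq_coe_iff.2 ⟨⟨hi1, hgap⟩, fun j ⟨hj1, hjgap⟩ =>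
      le_of_not_gt fun hji => (key_ne j).2 ⟨⟨hj1, by omega⟩, hjgap⟩ (hbefore j hji)⟩
    exact ⟨⟨i, hfirst, (mul_sub_pos_iff_of_mem_gapInterval hgap (hs i hi1)).2 hside⟩,
      hfirst ▸ by exact_mod_cast hik⟩
  · rintro ⟨⟨i, hi, hpos⟩, hk⟩
    obtain ⟨⟨hi1, hgap⟩, hmin⟩ := firstIdx_eq_coe_iff.1 hi
    have hik : i ≤ k := by rw [hi] at hk; exact_mod_cast hk
    refine ⟨i, fun j hj => not_not.1 fun hne => ?_, (key_lt i).2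
      ⟨⟨hi1, hik⟩, hgap, (mul_sub_pos_iff_of_mem_gapInterval hgap (hs i hi1)).1 hpos⟩⟩
    obtain ⟨⟨hj1, -⟩, hjgap⟩ := (key_ne j).1 hne
    exact (hmin ⟨hj1, hjgap⟩).not_gt hj

section MeasureBelow

variable {X α : Type*} [MeasurableSpace X] [LinearOrder α] {μ : Measure X} {S : Set X}
  {f : X → α}

def FibersHavePosMeasure (μ : Measure X) (S : Set X) (f : X → α) : Prop :=
  ∀ y ∈ S, ∃ t ⊆ S, MeasurableSet t ∧ 0 < μ t ∧ ∀ z ∈ t, f z = f y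

noncomputable def measureBelow (μ : Measure X) (S : Set X) (f : X → α) (x : X) : ℝ :=
  (μ {z | z ∈ S ∧ f z < f x}).toReal

lemma measureBelow_le_of_le (hS : μ S ≠ ⊤) {x y : X} (h : f x ≤ f y) :
    measureBelow μ S f x ≤ measureBelow μ S f y :=
  ENNReal.toReal_mono (measure_ne_top_of_subset (fun _ hz => hz.1) hS)
    (measure_mono fun _ hz => ⟨hz.1, hz.2.trans_le h⟩)

lemma measureBelow_lt_of_lt (hS : μ S ≠ ⊤) (hfib : FibersHavePosMeasure μ S f)
    {x y : X} (hy : y ∈ S) (h : f y < f x) :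
    measureBelow μ S f y < measureBelow μ S f x := by
  obtain ⟨t, htS, ht, htpos, hft⟩ := hfib y hy
  set A := {z | z ∈ S ∧ f z < f y}
  have hA : μ A ≠ ⊤ := measure_ne_top_of_subset (fun _ hz => hz.1) hS
  have hdisj : Disjoint A t :=
    Set.disjoint_left.2 fun z hzA hzt => (hft z hzt ▸ hzA.2).false
  have hsub : A ∪ t ⊆ {z | z ∈ S ∧ f z < f x} :=
    Set.union_subset (fun z hz => ⟨hz.1, hz.2.trans h⟩) fun z hz => ⟨htS hz, hft z hz ▸ h⟩
  refine ENNReal.toReal_strict_mono (measure_ne_top_of_subset (fun _ hz => hz.1) hS) ?_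
  calc μ A < μ A + μ t := ENNReal.lt_add_right hA htpos.ne'
    _ = μ (A ∪ t) := (measure_union hdisj ht).symm
    _ ≤ _ := measure_mono hsub

lemma measureBelow_lt_iff (hS : μ S ≠ ⊤) (hfib : FibersHavePosMeasure μ S f)
    {x y : X} (hy : y ∈ S) :
    measureBelow μ S f y < measureBelow μ S f x ↔ f y < f x :=
  ⟨fun h => lt_of_not_ge fun h' => h.not_ge (measureBelow_le_of_le hS h'),
    measureBelow_lt_of_lt hS hfib hy⟩

lemma measureBelow_eq_iff (hS : μ S ≠ ⊤) (hfib : FibersHavePosMeasure μ S f)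
    {x y : X} (hx : x ∈ S) (hy : y ∈ S) :
    measureBelow μ S f x = measureBelow μ S f y ↔ f x = f y := by
  refine ⟨fun h => ?_, fun h => by rw [measureBelow, measureBelow, h]⟩
  rcases lt_trichotomy (f x) (f y) with hlt | heq | hgt
  · exact absurd h (measureBelow_lt_of_lt hS hfib hx hlt).ne
  · exact heq
  · exact absurd h (measureBelow_lt_of_lt hS hfib hy hgt).ne'

lemma measureBelow_eq_measure_measureBelow_lt (hS : μ S ≠ ⊤)
    (hfib : FibersHavePosMeasure μ S f) (x : X) :
    measureBelow μ S f x =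
      (μ {y | y ∈ S ∧ measureBelow μ S f y < measureBelow μ S f x}).toReal := by
  have hset : {y | y ∈ S ∧ measureBelow μ S f y < measureBelow μ S f x} =
      {z | z ∈ S ∧ f z < f x} :=
    Set.ext fun y => and_congr_right fun hy => measureBelow_lt_iff hS hfib hy
  rw [hset, measureBelow]

end MeasureBelow

lemma phiK_eq_measureBelow {u s : ℕ → ℝ} (hs : ∀ j, 1 ≤ j → s j ≠ 0) (k : ℕ) :
    phiK u s k = measureBelow volume (Set.Icc 0 1) (fun x => toLex (sideKey u s k x)) := by
  funext x
  unfold phiK measureBelow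
  congr 2
  ext y
  exact and_congr_right fun _ => (toLex_sideKey_lt_iff hs).symm

section Cells

variable {v : ℕ → ℝ} {k m : ℕ} {x y : ℝ}

def cell (v : ℕ → ℝ) (k m : ℕ) : Set ℝ :=
  if m = k then Set.Icc (v k) 1 else Set.Ico (v m) (v (m + 1))

lemma le_of_mem_cell (hx : x ∈ cell v k m) : v m ≤ x := by
  unfold cell at hx
  split_ifs at hx with h
  · exact h ▸ hx.1
  · exact hx.1

lemma lt_of_mem_cell (hm : m ≠ k) (hx : x ∈ cell v k m) : x < v (m + 1) := by
  rw [cell, if_neg hm] at hx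
  exact hx.2

lemma measurableSet_cell : MeasurableSet (cell v k m) := by
  unfold cell
  split_ifs
  exacts [measurableSet_Icc, measurableSet_Ico]

lemma volume_cell_pos (hv : StrictMonoOn v (Set.Icc 0 (k + 1))) (hv1 : v (k + 1) = 1)
    (hm : m ≤ k) : 0 < volume (cell v k m) := by
  have hlt : v m < v (m + 1) := hv ⟨m.zero_le, by omega⟩ ⟨(m + 1).zero_le, by omega⟩ m.lt_succ_self
  unfold cell
  split_ifs with h
  · subst h
    rw [Real.volume_Icc, ENNReal.ofReal_pos, sub_pos, ← hv1]
    exact hlt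
  · rwa [Real.volume_Ico, ENNReal.ofReal_pos, sub_pos]

lemma cell_subset_Icc (hv01 : ∀ i ≤ k + 1, v i ∈ Set.Icc 0 1) (hm : m ≤ k) :
    cell v k m ⊆ Set.Icc 0 1 := by
  intro x hx
  refine ⟨(hv01 m (by omega)).1.trans (le_of_mem_cell hx), ?_⟩
  by_cases h : m = k
  · rw [cell, if_pos h] at hx
    exact hx.2
  · exact ((lt_of_mem_cell h hx).trans_le (hv01 (m + 1) (by omega)).2).le

lemma exists_mem_cell (hv0 : v 0 = 0) (hx : x ∈ Set.Icc (0 : ℝ) 1) : ∃ m ≤ k, x ∈ cell v k m := by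
  classical
  set m := Nat.findGreatest (fun i => v i ≤ x) k
  have hvm : v m ≤ x := Nat.findGreatest_spec (P := fun i => v i ≤ x) k.zero_le (hv0 ▸ hx.1)
  refine ⟨m, Nat.findGreatest_le k, ?_⟩
  unfold cell
  split_ifs with h
  · exact ⟨h ▸ hvm, hx.2⟩
  · exact ⟨hvm, lt_of_not_ge (Nat.findGreatest_is_greatest m.lt_succ_self
      (by have := Nat.findGreatest_le (P := fun i => v i ≤ x) k; omega))⟩

lemma le_iff_le_of_mem_cell (hv : MonotoneOn v (Set.Icc 0 (k + 1))) (hm : m ≤ k)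
    (hx : x ∈ cell v k m) (hy : y ∈ cell v k m) {i : ℕ} (hi : i ≤ k) : v i ≤ x ↔ v i ≤ y := by
  rcases le_or_gt i m with him | hmi
  · have hvi : v i ≤ v m := hv ⟨i.zero_le, by omega⟩ ⟨m.zero_le, by omega⟩ him
    exact iff_of_true (hvi.trans (le_of_mem_cell hx)) (hvi.trans (le_of_mem_cell hy))
  · have hmk : m ≠ k := by omega
    have hvi : v (m + 1) ≤ v i := hv ⟨(m + 1).zero_le, by omega⟩ ⟨i.zero_le, by omega⟩ hmi
    exact iff_of_false (not_le.2 ((lt_of_mem_cell hmk hx).trans_le hvi))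
      (not_le.2 ((lt_of_mem_cell hmk hy).trans_le hvi))

lemma lt_apply_succ_le_of_mem_cell (hv : MonotoneOn v (Set.Icc 0 (k + 1))) {m' : ℕ}
    (hmm' : m < m') (hm' : m' ≤ k) (hx : x ∈ cell v k m) (hy : y ∈ cell v k m') :
    x < v (m + 1) ∧ v (m + 1) ≤ y :=
  ⟨lt_of_mem_cell (by omega) hx,
    (hv ⟨(m + 1).zero_le, by omega⟩ ⟨m'.zero_le, by omega⟩ hmm').trans (le_of_mem_cell hy)⟩

end Cells

section Enumeration

variable {u : ℕ → ℝ} {k : ℕ} {v : ℕ → ℝ}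

lemma apply_mem_Icc_of_image_eq (hu : ∀ j, 1 ≤ j → u j ∈ Set.Ioo (0 : ℝ) 1)
    (hrange : v '' Set.Icc 0 (k + 1) =
      insert (0 : ℝ) (insert (1 : ℝ) {x : ℝ | ∃ j, 1 ≤ j ∧ j ≤ k ∧ u j = x}))
    {i : ℕ} (hi : i ≤ k + 1) : v i ∈ Set.Icc 0 1 := by
  have hvi : v i ∈ v '' Set.Icc 0 (k + 1) := Set.mem_image_of_mem v ⟨i.zero_le, hi⟩
  rw [hrange] at hvi
  rcases hvi with h | h | ⟨j, hj, -, h⟩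
  · simp [h]
  · simp [h]
  · exact h ▸ Set.Ioo_subset_Icc_self (hu j hj)

lemma apply_zero_eq_zero_of_image_eq (hu : ∀ j, 1 ≤ j → u j ∈ Set.Ioo (0 : ℝ) 1)
    (hmono : StrictMonoOn v (Set.Icc 0 (k + 1)))
    (hrange : v '' Set.Icc 0 (k + 1) =
      insert (0 : ℝ) (insert (1 : ℝ) {x : ℝ | ∃ j, 1 ≤ j ∧ j ≤ k ∧ u j = x})) :
    v 0 = 0 := by
  obtain ⟨i, hi, hvi⟩ : (0 : ℝ) ∈ v '' Set.Icc 0 (k + 1) := hrange ▸ Set.mem_insert _ _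
  exact le_antisymm (hvi ▸ hmono.monotoneOn ⟨le_rfl, (k + 1).zero_le⟩ hi i.zero_le)
    (apply_mem_Icc_of_image_eq hu hrange (k + 1).zero_le).1

lemma apply_succ_eq_one_of_image_eq (hu : ∀ j, 1 ≤ j → u j ∈ Set.Ioo (0 : ℝ) 1)
    (hmono : StrictMonoOn v (Set.Icc 0 (k + 1)))
    (hrange : v '' Set.Icc 0 (k + 1) =
      insert (0 : ℝ) (insert (1 : ℝ) {x : ℝ | ∃ j, 1 ≤ j ∧ j ≤ k ∧ u j = x})) :
    v (k + 1) = 1 := by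
  obtain ⟨i, hi, hvi⟩ : (1 : ℝ) ∈ v '' Set.Icc 0 (k + 1) :=
    hrange ▸ Set.mem_insert_of_mem _ (Set.mem_insert _ _)
  exact le_antisymm (apply_mem_Icc_of_image_eq hu hrange le_rfl).2
    (hvi ▸ hmono.monotoneOn hi ⟨(k + 1).zero_le, le_rfl⟩ hi.2)

lemma exists_apply_eq_of_image_eq (hu : ∀ j, 1 ≤ j → u j ∈ Set.Ioo (0 : ℝ) 1)
    (hv1 : v (k + 1) = 1)
    (hrange : v '' Set.Icc 0 (k + 1) =
      insert (0 : ℝ) (insert (1 : ℝ) {x : ℝ | ∃ j, 1 ≤ j ∧ j ≤ k ∧ u j = x}))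
    {j : ℕ} (hj : 1 ≤ j) (hjk : j ≤ k) : ∃ i ≤ k, v i = u j := by
  obtain ⟨i, hi, hvi⟩ : u j ∈ v '' Set.Icc 0 (k + 1) :=
    hrange ▸ Set.mem_insert_of_mem _ (Set.mem_insert_of_mem _ ⟨j, hj, hjk, rfl⟩)
  have hik : i ≠ k + 1 := by
    rintro rfl
    exact (hu j hj).2.ne (hvi ▸ hv1)
  exact ⟨i, by have := hi.2; omega, hvi⟩

lemma exists_eq_apply_of_image_eq (hmono : StrictMonoOn v (Set.Icc 0 (k + 1)))
    (hv0 : v 0 = 0) (hv1 : v (k + 1) = 1)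
    (hrange : v '' Set.Icc 0 (k + 1) =
      insert (0 : ℝ) (insert (1 : ℝ) {x : ℝ | ∃ j, 1 ≤ j ∧ j ≤ k ∧ u j = x}))
    {i : ℕ} (hi : 1 ≤ i) (hik : i ≤ k) : ∃ j, 1 ≤ j ∧ j ≤ k ∧ u j = v i := by
  have hvi : v i ∈ v '' Set.Icc 0 (k + 1) := Set.mem_image_of_mem v ⟨i.zero_le, by omega⟩
  rw [hrange] at hvi
  rcases hvi with h | h | h
  · have := hmono.injOn ⟨i.zero_le, by omega⟩ ⟨le_rfl, (k + 1).zero_le⟩ (h.trans hv0.symm)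
    omega
  · have := hmono.injOn ⟨i.zero_le, by omega⟩ ⟨(k + 1).zero_le, le_rfl⟩ (h.trans hv1.symm)
    omega
  · exact h

end Enumeration

section SideKeyOnCells

variable {u s v : ℕ → ℝ} {k m : ℕ} {x y : ℝ}

lemma sideKey_eq_of_mem_cell (hv : MonotoneOn v (Set.Icc 0 (k + 1)))
    (hcut : ∀ j, 1 ≤ j → j ≤ k → ∃ i ≤ k, v i = u j) (hm : m ≤ k)
    (hx : x ∈ cell v k m) (hy : y ∈ cell v k m) : sideKey u s k x = sideKey u s k y :=
  sideKey_eq_iff.2 fun j hj hjk => by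
    obtain ⟨i, hi, hvi⟩ := hcut j hj hjk
    rw [← hvi]
    exact le_iff_le_of_mem_cell hv hm hx hy hi

lemma sideKey_ne_of_mem_cell (hv : MonotoneOn v (Set.Icc 0 (k + 1)))
    (hcut : ∀ i, 1 ≤ i → i ≤ k → ∃ j, 1 ≤ j ∧ j ≤ k ∧ u j = v i) {m' : ℕ}
    (hmm' : m < m') (hm' : m' ≤ k) (hx : x ∈ cell v k m) (hy : y ∈ cell v k m') :
    sideKey u s k x ≠ sideKey u s k y := by
  obtain ⟨j, hj, hjk, hvj⟩ := hcut (m + 1) (by omega) (by omega)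
  obtain ⟨hxv, hvy⟩ := lt_apply_succ_le_of_mem_cell hv hmm' hm' hx hy
  intro h
  rw [sideKey_eq_iff] at h
  rw [← hvj] at hxv hvy
  exact hxv.not_ge ((h j hj hjk).2 hvy)

lemma fibersHavePosMeasure_sideKey (hv : StrictMonoOn v (Set.Icc 0 (k + 1))) (hv0 : v 0 = 0)
    (hv1 : v (k + 1) = 1) (hv01 : ∀ i ≤ k + 1, v i ∈ Set.Icc 0 1)
    (hcut : ∀ j, 1 ≤ j → j ≤ k → ∃ i ≤ k, v i = u j) :
    FibersHavePosMeasure volume (Set.Icc 0 1) fun x => toLex (sideKey u s k x) := by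
  intro y hy
  obtain ⟨m, hm, hym⟩ := exists_mem_cell (k := k) hv0 hy
  exact ⟨cell v k m, cell_subset_Icc hv01 hm, measurableSet_cell, volume_cell_pos hv hv1 hm,
    fun z hz => congrArg toLex (sideKey_eq_of_mem_cell hv.monotoneOn hcut hm hz hym)⟩

end SideKeyOnCells

theorem phiK_selfdescribing_and_step_general
    (u s : ℕ → ℝ)
    (hu : ∀ j, 1 ≤ j → u j ∈ Set.Ioo (0:ℝ) 1)
    (hs : ∀ j, 1 ≤ j → s j = 1 ∨ s j = -1)
    (k : ℕ) (v : ℕ → ℝ)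
    (hmono : StrictMonoOn v (Set.Icc 0 (k+1)))
    (hrange : v '' Set.Icc 0 (k+1) =
      insert (0:ℝ) (insert (1:ℝ) {x : ℝ | ∃ j, 1 ≤ j ∧ j ≤ k ∧ u j = x})) :
    (∀ x ∈ Set.Icc (0:ℝ) 1,
      phiK u s k x =
        (volume {y : ℝ | y ∈ Set.Icc (0:ℝ) 1 ∧ phiK u s k y < phiK u s k x}).toReal) ∧
    (∀ i ≤ k, ∀ x ∈ (if i = k then Set.Icc (v k) 1 else Set.Ico (v i) (v (i+1))),
      ∀ y ∈ (if i = k then Set.Icc (v k) 1 else Set.Ico (v i) (v (i+1))),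
        phiK u s k x = phiK u s k y) ∧
    (∀ i ≤ k, ∀ i' ≤ k, i ≠ i' →
      ∀ x ∈ (if i = k then Set.Icc (v k) 1 else Set.Ico (v i) (v (i+1))),
      ∀ y ∈ (if i' = k then Set.Icc (v k) 1 else Set.Ico (v i') (v (i'+1))),
        phiK u s k x ≠ phiK u s k y) := by
  have hs0 : ∀ j, 1 ≤ j → s j ≠ 0 := fun j hj => by rcases hs j hj with h | h <;> norm_num [h]
  have hv0 := apply_zero_eq_zero_of_image_eq hu hmono hrange
  have hv1 := apply_succ_eq_one_of_image_eq hu hmono hrange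
  have hv01 := fun i => apply_mem_Icc_of_image_eq (i := i) hu hrange
  have hcut := fun j => exists_apply_eq_of_image_eq (j := j) hu hv1 hrange
  have hcut' := fun i => exists_eq_apply_of_image_eq (i := i) hmono hv0 hv1 hrange
  have hS : volume (Set.Icc (0 : ℝ) 1) ≠ ⊤ := measure_Icc_lt_top.ne
  have hfib := fibersHavePosMeasure_sideKey (s := s) hmono hv0 hv1 hv01 hcut
  rw [phiK_eq_measureBelow hs0]
  refine ⟨fun x _ => measureBelow_eq_measure_measureBelow_lt hS hfib x,
    fun i hi x hx y hy => by rw [measureBelow, measureBelow,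
      sideKey_eq_of_mem_cell hmono.monotoneOn hcut hi hx hy],
    fun i hi i' hi' hii' x hx y hy => ?_⟩
  rw [Ne, measureBelow_eq_iff hS hfib (cell_subset_Icc hv01 hi hx) (cell_subset_Icc hv01 hi' hy)]
  intro heq
  rcases hii'.lt_or_gt with h | h
  · exact sideKey_ne_of_mem_cell hmono.monotoneOn hcut' h hi' hx hy (toLex.injective heq)
  · exact sideKey_ne_of_mem_cell hmono.monotoneOn hcut' h hi hy hx (toLex.injective heq).symm

/-- assume the `u_j` pairwise distinct, and let
`0 = v_0 < v_1 < … < v_k < v_{k+1} = 1` be the increasing rearrangement of `{0, u_1, …, u_k, 1}`.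
Then (i) for all `x ∈ [0,1]`, `φ_k(x) = Leb({ y ∈ [0,1] : φ_k(y) < φ_k(x) })`;
(ii) `φ_k` is constant on each of the intervals `[v_0,v_1), …, [v_{k−1},v_k), [v_k,1]`
and takes distinct values on distinct intervals. -/
theorem phiK_selfdescribing_and_step
    (u s : ℕ → ℝ)
    (hu : ∀ j, 1 ≤ j → u j ∈ Set.Ioo (0:ℝ) 1)
    (hs : ∀ j, 1 ≤ j → s j = 1 ∨ s j = -1)
    (hdist : ∀ j k, 1 ≤ j → 1 ≤ k → u j = u k → j = k)
    (k : ℕ) (v : ℕ → ℝ)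
    (hmono : StrictMonoOn v (Set.Icc 0 (k+1)))
    (hrange : v '' Set.Icc 0 (k+1) =
      insert (0:ℝ) (insert (1:ℝ) {x : ℝ | ∃ j, 1 ≤ j ∧ j ≤ k ∧ u j = x})) :
    (∀ x ∈ Set.Icc (0:ℝ) 1,
      phiK u s k x =
        (volume {y : ℝ | y ∈ Set.Icc (0:ℝ) 1 ∧ phiK u s k y < phiK u s k x}).toReal) ∧
    (∀ i ≤ k, ∀ x ∈ (if i = k then Set.Icc (v k) 1 else Set.Ico (v i) (v (i+1))),
      ∀ y ∈ (if i = k then Set.Icc (v k) 1 else Set.Ico (v i) (v (i+1))),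
        phiK u s k x = phiK u s k y) ∧
    (∀ i ≤ k, ∀ i' ≤ k, i ≠ i' →
      ∀ x ∈ (if i = k then Set.Icc (v k) 1 else Set.Ico (v i) (v (i+1))),
      ∀ y ∈ (if i' = k then Set.Icc (v k) 1 else Set.Ico (v i') (v (i'+1))),
        phiK u s k x ≠ phiK u s k y) :=
  phiK_selfdescribing_and_step_general u s hu hs k v hmono hrange
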